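/- For every α with 2/3 ≤ α < 1 and every δ > 0, there exists an instance of the FSSP with two agents and separate item sets in which every item weight is at most α, with a system optimum of value z* > 0 and a feasible solution x that is both maximin fair and Kalai–Smorodinski fair, such that z* − z(x) ≥ (2 − 1/α − δ) · z*. Hence the bound 2 − 1/α on the Price of Fairness for maximin and Kalai–Smorodinski fair solutions is tight for 2/3 ≤ α ≤ 1. -/
import Mathlib


/-! Definitions for the Fair Subset Sum Problem (FSSP) with two agents `A` and `B`
owning separate item sets with weights `a : Fin n → ℝ` and `b : Fin m → ℝ`.
A solution is a pair of index subsets; feasibility means the total selected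
weight does not exceed the capacity `1`. -/

/-- Total weight of the items of `S`. -/
noncomputable def sumw {n : ℕ} (a : Fin n → ℝ) (S : Finset (Fin n)) : ℝ := ∑ i ∈ S, a i

/-- A feasible solution of FSSP with separate item sets. -/
def Feas {n m : ℕ} (a : Fin n → ℝ) (b : Fin m → ℝ)
    (x : Finset (Fin n) × Finset (Fin m)) : Prop :=
  sumw a x.1 + sumw b x.2 ≤ 1

/-- Social utility `z(x) = a(x) + b(x)`. -/
noncomputable def zv {n m : ℕ} (a : Fin n → ℝ) (b : Fin m → ℝ)
    (x : Finset (Fin n) × Finset (Fin m)) : ℝ :=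
  sumw a x.1 + sumw b x.2

/-- Pareto efficient feasible solution. -/
def Pareto {n m : ℕ} (a : Fin n → ℝ) (b : Fin m → ℝ)
    (x : Finset (Fin n) × Finset (Fin m)) : Prop :=
  Feas a b x ∧ ¬ ∃ y, Feas a b y ∧ sumw a x.1 ≤ sumw a y.1 ∧ sumw b x.2 ≤ sumw b y.2 ∧
    (sumw a x.1 < sumw a y.1 ∨ sumw b x.2 < sumw b y.2)

/-- System optimum: a feasible solution maximizing the social utility. -/
def SysOpt {n m : ℕ} (a : Fin n → ℝ) (b : Fin m → ℝ)
    (x : Finset (Fin n) × Finset (Fin m)) : Prop :=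
  Feas a b x ∧ ∀ y, Feas a b y → zv a b y ≤ zv a b x

/-- Maximin fair solution: Pareto efficient and maximizing `min{a(x), b(x)}`. -/
def Maximin {n m : ℕ} (a : Fin n → ℝ) (b : Fin m → ℝ)
    (x : Finset (Fin n) × Finset (Fin m)) : Prop :=
  Pareto a b x ∧ ∀ y, Feas a b y →
    min (sumw a y.1) (sumw b y.2) ≤ min (sumw a x.1) (sumw b x.2)

/-- Proportional fair solution. -/
def PropFair {n m : ℕ} (a : Fin n → ℝ) (b : Fin m → ℝ)
    (x : Finset (Fin n) × Finset (Fin m)) : Prop :=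
  Feas a b x ∧ 0 < sumw a x.1 ∧ 0 < sumw b x.2 ∧
    ∀ y, Feas a b y → sumw a y.1 / sumw a x.1 + sumw b y.2 / sumw b x.2 ≤ 2

/-- Kalai–Smorodinski fair solution: Pareto efficient and maximizing
`min{a(x)/â, b(x)/b̂}`, where `â` and `b̂` are the (positive) maximal utilities
each agent can obtain over all feasible solutions. -/
def KSFair {n m : ℕ} (a : Fin n → ℝ) (b : Fin m → ℝ)
    (x : Finset (Fin n) × Finset (Fin m)) : Prop :=
  Pareto a b x ∧ ∃ ahat bhat : ℝ, 0 < ahat ∧ 0 < bhat ∧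
    IsGreatest {v | ∃ y, Feas a b y ∧ sumw a y.1 = v} ahat ∧
    IsGreatest {v | ∃ y, Feas a b y ∧ sumw b y.2 = v} bhat ∧
    ∀ y, Feas a b y →
      min (sumw a y.1 / ahat) (sumw b y.2 / bhat) ≤
        min (sumw a x.1 / ahat) (sumw b x.2 / bhat)

/-- A valid FSSP instance with separate item sets in which every item weight is
nonnegative and at most `α`, and the total weight exceeds the capacity `1`. -/
def ValidInst {n m : ℕ} (a : Fin n → ℝ) (b : Fin m → ℝ) (α : ℝ) : Prop :=
  (∀ i, 0 ≤ a i) ∧ (∀ i, 0 ≤ b i) ∧ (∀ i, a i ≤ α) ∧ (∀ i, b i ≤ α) ∧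
    1 < (∑ i, a i) + (∑ i, b i)


lemma fin1_cases (S : Finset (Fin 1)) : S = ∅ ∨ S = {0} := by
  have : S ⊆ {0} := fun x _ => by simp [Subsingleton.elim x 0]
  exact Finset.subset_singleton_iff.mp this

lemma sumw_empty (a : Fin 1 → ℝ) : sumw a (∅ : Finset (Fin 1)) = 0 := by simp [sumw]
lemma sumw_single (a : Fin 1 → ℝ) : sumw a ({0} : Finset (Fin 1)) = a 0 := by simp [sumw]

/-- For every `2/3 ≤ α < 1` and `δ > 0` there is an FSSP instance with separate
item sets, weights at most `α`, a system optimum with positive value and a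
solution that is both maximin and Kalai–Smorodinski fair whose loss is at least
`(2 - 1/α - δ) · z*`: the bound `2 - 1/α` is tight for `2/3 ≤ α ≤ 1`. -/
theorem pof_maximin_ks_lower_bound_large_alpha (α : ℝ) (hα0 : 2/3 ≤ α) (hα1 : α < 1)
    (δ : ℝ) (hδ : 0 < δ) :
    ∃ (n m : ℕ) (a : Fin n → ℝ) (b : Fin m → ℝ),
      ValidInst a b α ∧
      ∃ xopt : Finset (Fin n) × Finset (Fin m), SysOpt a b xopt ∧ 0 < zv a b xopt ∧
        ∃ x : Finset (Fin n) × Finset (Fin m), Maximin a b x ∧ KSFair a b x ∧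
          (2 - 1/α - δ) * zv a b xopt ≤ zv a b xopt - zv a b x := by
  have hε0 : (0:ℝ) < min (δ/2) (1/3) := lt_min (by linarith) (by norm_num)
  have hεδ : min (δ/2) (1/3) ≤ δ/2 := min_le_left _ _
  have hε3 : min (δ/2) (1/3) ≤ 1/3 := min_le_right _ _
  set ε : ℝ := min (δ/2) (1/3) with hεdef
  set a : Fin 1 → ℝ := fun _ => 1 - α + ε with ha
  set b : Fin 1 → ℝ := fun _ => α with hb
  have ha0 : a 0 = 1 - α + ε := rfl
  have hb0 : b 0 = α := rfl
  -- analysis of all feasible solutions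
  have key : ∀ y : Finset (Fin 1) × Finset (Fin 1), Feas a b y →
      (sumw a y.1 = 0 ∧ sumw b y.2 = 0) ∨ (sumw a y.1 = 1 - α + ε ∧ sumw b y.2 = 0) ∨
      (sumw a y.1 = 0 ∧ sumw b y.2 = α) := by
    intro y hy
    rcases fin1_cases y.1 with h1 | h1 <;> rcases fin1_cases y.2 with h2 | h2 <;>
      rw [Feas, h1, h2] at hy <;> rw [h1, h2]
    · exact Or.inl ⟨sumw_empty a, sumw_empty b⟩
    · exact Or.inr (Or.inr ⟨sumw_empty a, sumw_single b⟩)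
    · exact Or.inr (Or.inl ⟨sumw_single a, sumw_empty b⟩)
    · rw [sumw_single, sumw_single, ha0, hb0] at hy; linarith
  have hfeasB : Feas a b ((∅ : Finset (Fin 1)), ({0} : Finset (Fin 1))) := by
    show sumw a ∅ + sumw b {0} ≤ 1
    rw [sumw_empty, sumw_single, hb0]; linarith
  have hfeasA : Feas a b (({0} : Finset (Fin 1)), (∅ : Finset (Fin 1))) := by
    show sumw a {0} + sumw b ∅ ≤ 1
    rw [sumw_single, sumw_empty, ha0]; linarith
  have hParetoA : Pareto a b (({0} : Finset (Fin 1)), (∅ : Finset (Fin 1))) := by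
    refine ⟨hfeasA, ?_⟩
    rintro ⟨y, hy, h1, h2, h3⟩
    have := key y hy
    simp only [sumw_single, sumw_empty, ha0] at h1 h2 h3
    rcases this with ⟨e1, e2⟩ | ⟨e1, e2⟩ | ⟨e1, e2⟩ <;> simp only [e1, e2] at h1 h2 h3 <;>
      rcases h3 with h3 | h3 <;> linarith
  refine ⟨1, 1, a, b, ?_, ((∅ : Finset (Fin 1)), ({0} : Finset (Fin 1))), ⟨hfeasB, ?_⟩, ?_,
    (({0} : Finset (Fin 1)), (∅ : Finset (Fin 1))), ⟨hParetoA, ?_⟩, ⟨hParetoA, ?_⟩, ?_⟩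
  · -- ValidInst
    refine ⟨fun i => ?_, fun i => ?_, fun i => ?_, fun i => ?_, ?_⟩
    · show 0 ≤ 1 - α + ε; linarith
    · show 0 ≤ α; linarith
    · show 1 - α + ε ≤ α; linarith
    · show α ≤ α; exact le_rfl
    · simp only [Fin.sum_univ_one, ha0, hb0]; linarith
  · -- SysOpt maximality
    intro y hy
    have hz : zv a b ((∅ : Finset (Fin 1)), ({0} : Finset (Fin 1))) = α := by
      show sumw a ∅ + sumw b {0} = α; rw [sumw_empty, sumw_single, hb0]; ring
    rw [hz]
    rcases key y hy with ⟨e1, e2⟩ | ⟨e1, e2⟩ | ⟨e1, e2⟩ <;>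
      · show sumw a y.1 + sumw b y.2 ≤ α; rw [e1, e2]; linarith
  · -- 0 < z*
    show 0 < sumw a ∅ + sumw b {0}
    rw [sumw_empty, sumw_single, hb0]; linarith
  · -- Maximin maximality
    intro y hy
    have hx : min (sumw a ({0} : Finset (Fin 1))) (sumw b (∅ : Finset (Fin 1))) = 0 := by
      rw [sumw_single, sumw_empty, ha0]
      exact min_eq_right (by linarith)
    rw [hx]
    rcases key y hy with ⟨e1, e2⟩ | ⟨e1, e2⟩ | ⟨e1, e2⟩ <;> rw [e1, e2] <;>
      simp
  · -- KSFair
    refine ⟨1 - α + ε, α, by linarith, by linarith, ?_, ?_, ?_⟩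
    · constructor
      · exact ⟨_, hfeasA, by rw [sumw_single, ha0]⟩
      · rintro v ⟨y, hy, rfl⟩
        rcases key y hy with ⟨e1, _⟩ | ⟨e1, _⟩ | ⟨e1, _⟩ <;> rw [e1] <;> linarith
    · constructor
      · exact ⟨_, hfeasB, by rw [sumw_single, hb0]⟩
      · rintro v ⟨y, hy, rfl⟩
        rcases key y hy with ⟨_, e2⟩ | ⟨_, e2⟩ | ⟨_, e2⟩ <;> rw [e2] <;> linarith
    · intro y hy
      have hx : min (sumw a ({0} : Finset (Fin 1)) / (1 - α + ε))
          (sumw b (∅ : Finset (Fin 1)) / α) = 0 := by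
        rw [sumw_single, sumw_empty, ha0, zero_div]
        exact min_eq_right (div_nonneg (by linarith) (by linarith))
      rw [hx]
      rcases key y hy with ⟨e1, e2⟩ | ⟨e1, e2⟩ | ⟨e1, e2⟩ <;> rw [e1, e2] <;>
        simp
  · -- final inequality
    have hz1 : zv a b ((∅ : Finset (Fin 1)), ({0} : Finset (Fin 1))) = α := by
      show sumw a ∅ + sumw b {0} = α; rw [sumw_empty, sumw_single, hb0]; ring
    have hz2 : zv a b (({0} : Finset (Fin 1)), (∅ : Finset (Fin 1))) = 1 - α + ε := by
      show sumw a {0} + sumw b ∅ = 1 - α + ε; rw [sumw_single, sumw_empty, ha0]; ring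
    rw [hz1, hz2]
    have hαpos : (0:ℝ) < α := by linarith
    have h1 : (2 - 1/α - δ) * α = 2*α - 1 - δ*α := by field_simp
    rw [h1]
    have : ε ≤ δ * α := le_trans hεδ (by nlinarith)
    linarith
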